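/- Consider an urn model with K colors satisfying Assumptions 1, 2 and 3. Let Y_n = χ_n R_n 1^T be the total amount added at trial n, and define δ_n = (χ_n R_n − (C_{n−1}/S_{n−1}) Y_n) − E[ (χ_n R_n − (C_{n−1}/S_{n−1}) Y_n) 1{‖R_n‖ ≤ n} | F_{n−1} ] and ξ_n = (C_{n−1}/S_{n−1})(H̃_{n−1} − H) − (C_{n−1}/S_{n−1})·( (C_{n−1}/S_{n−1})(H̃_{n−1} − H) 1^T ). Then with probability 1, (1/n) Σ_{m=1}^n δ_m → 0 and (1/n) Σ_{m=1}^n ξ_m → 0. -/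

import Mathlib

/-!
Truncate the replacement matrices at `‖R_n‖ ≤ n`. Either form of Assumption 2 makes both
`Σ ℙ(‖R_n‖ > n)` and `Σ 𝔼[‖R_n‖² ; ‖R_n‖ ≤ n] / n²` converge. By Borel–Cantelli the truncation
is eventually inactive, so `δ_n` eventually agrees with the truncated martingale difference `d_n`;
the martingale `Σ d_m / m` is bounded in `L²` by the second series, hence converges a.s., and
Kronecker's lemma gives `(1/n) Σ δ_m → 0`. Since `C_{n-1} / S_{n-1}` is a sub-probability vector,
`‖ξ_n‖ ≤ 2 ‖H̃_{n-1} - H‖`, so Assumption 3 is exactly what makes the `ξ_n` Cesàro negligible.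
-/

open MeasureTheory Filter
open scoped Topology ENNReal

noncomputable section

/-- Max row-sum norm `‖A‖ = max_i Σ_j |A i j|` of a `K × K` matrix. -/
def matNorm {K : ℕ} (A : Fin K → Fin K → ℝ) : ℝ := ⨆ i, ∑ j, |A i j|

/-- Irreducibility of a nonnegative square matrix. -/
def MatIrreducible {K : ℕ} (A : Fin K → Fin K → ℝ) : Prop :=
  ∀ i j, ∃ N : ℕ, 1 ≤ N ∧ 0 < (Matrix.of A ^ N) i j

open Finset ProbabilityTheory

lemma abs_sub_mul_sum_le {ι : Type*} [Fintype ι] (r : ι → ℝ) {p : ℝ} (hp0 : 0 ≤ p)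
    (hp1 : p ≤ 1) (j : ι) : |r j - p * ∑ k, r k| ≤ 2 * ∑ k, |r k| := by
  have hj : |r j| ≤ ∑ k, |r k| := single_le_sum (fun k _ => abs_nonneg (r k)) (mem_univ j)
  have hsum : |p * ∑ k, r k| ≤ ∑ k, |r k| := by
    rw [abs_mul, abs_of_nonneg hp0]
    exact (mul_le_of_le_one_left (abs_nonneg _) hp1).trans (abs_sum_le_sum_abs _ _)
  linarith [(abs_sub (r j) (p * ∑ k, r k)).trans (add_le_add hj hsum)]

section MatNorm

variable {K : ℕ}

lemma sum_abs_le_matNorm (A : Fin K → Fin K → ℝ) (i : Fin K) : ∑ j, |A i j| ≤ matNorm A :=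
  le_ciSup (f := fun i => ∑ j, |A i j|) (Set.finite_range _).bddAbove i

lemma matNorm_nonneg (A : Fin K → Fin K → ℝ) : 0 ≤ matNorm A :=
  Real.iSup_nonneg fun _ => sum_nonneg fun _ _ => abs_nonneg _

lemma measurable_matNorm : Measurable (matNorm (K := K)) :=
  Measurable.iSup fun i => measurable_sum _ fun j _ =>
    ((measurable_pi_apply j).comp (measurable_pi_apply i)).abs

lemma sum_mul_sum_abs_le_matNorm {p : Fin K → ℝ} (hp : ∀ i, 0 ≤ p i) (hp1 : ∑ i, p i ≤ 1)
    (D : Fin K → Fin K → ℝ) : ∑ i, p i * ∑ j, |D i j| ≤ matNorm D :=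
  calc ∑ i, p i * ∑ j, |D i j| ≤ ∑ i, p i * matNorm D :=
        sum_le_sum fun i _ => mul_le_mul_of_nonneg_left (sum_abs_le_matNorm D i) (hp i)
    _ = (∑ i, p i) * matNorm D := (sum_mul ..).symm
    _ ≤ matNorm D := mul_le_of_le_one_left (matNorm_nonneg D) hp1

lemma norm_sum_mul_sub_mul_sum_le {p : Fin K → ℝ} (hp : ∀ i, 0 ≤ p i) (hp1 : ∑ i, p i ≤ 1)
    (D : Fin K → Fin K → ℝ) :
    ‖fun j => (∑ i, p i * D i j) - p j * ∑ i, ∑ j', p i * D i j'‖ ≤ 2 * matNorm D := by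
  have hpj : ∀ j, p j ≤ 1 := fun j => (single_le_sum (fun i _ => hp i) (mem_univ j)).trans hp1
  have hcol : ∀ j, |∑ i, p i * D i j| ≤ matNorm D := fun j =>
    calc |∑ i, p i * D i j| ≤ ∑ i, p i * ∑ j', |D i j'| := by
          refine (abs_sum_le_sum_abs _ _).trans (sum_le_sum fun i _ => ?_)
          rw [abs_mul, abs_of_nonneg (hp i)]
          exact mul_le_mul_of_nonneg_left
            (single_le_sum (fun j' _ => abs_nonneg (D i j')) (mem_univ j)) (hp i)
      _ ≤ matNorm D := sum_mul_sum_abs_le_matNorm hp hp1 D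
  have htotal : |∑ i, ∑ j', p i * D i j'| ≤ matNorm D :=
    calc |∑ i, ∑ j', p i * D i j'| ≤ ∑ i, p i * ∑ j', |D i j'| := by
          refine (abs_sum_le_sum_abs _ _).trans (sum_le_sum fun i _ => ?_)
          rw [← mul_sum, abs_mul, abs_of_nonneg (hp i)]
          exact mul_le_mul_of_nonneg_left (abs_sum_le_sum_abs _ _) (hp i)
      _ ≤ matNorm D := sum_mul_sum_abs_le_matNorm hp hp1 D
  refine (pi_norm_le_iff_of_nonneg (by linarith [matNorm_nonneg D])).2 fun j => ?_
  rw [Real.norm_eq_abs, two_mul]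
  refine (abs_sub _ _).trans (add_le_add (hcol j) ?_)
  rw [abs_mul, abs_of_nonneg (hp j)]
  exact (mul_le_of_le_one_left (abs_nonneg _) (hpj j)).trans htotal

end MatNorm

lemma sum_Icc_one_eq_sum_range {M : Type*} [AddCommMonoid M] (f : ℕ → M) (n : ℕ) :
    ∑ m ∈ Icc 1 n, f m = ∑ k ∈ range n, f (k + 1) := by
  rw [range_eq_Ico, sum_Ico_add' f 0 n 1]
  rfl

lemma tendsto_inv_smul_sum_Icc_of_norm_le {E : Type*} [SeminormedAddCommGroup E]
    [NormedSpace ℝ E] {u : ℕ → E} {v : ℕ → ℝ} (huv : ∀ k, ‖u (k + 1)‖ ≤ v k)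
    (hv : Tendsto (fun n : ℕ => (n : ℝ)⁻¹ * ∑ k ∈ range n, v k) atTop (𝓝 0)) :
    Tendsto (fun n : ℕ => (n : ℝ)⁻¹ • ∑ m ∈ Icc 1 n, u m) atTop (𝓝 0) := by
  refine squeeze_zero_norm (fun n => ?_) hv
  rw [norm_smul, norm_inv, Real.norm_natCast, sum_Icc_one_eq_sum_range]
  exact mul_le_mul_of_nonneg_left ((norm_sum_le _ _).trans (sum_le_sum fun k _ => huv k))
    (by positivity)

theorem Filter.Tendsto.kronecker {d : ℕ → ℝ} {L : ℝ}
    (h : Tendsto (fun n : ℕ => ∑ m ∈ Icc 1 n, (m : ℝ)⁻¹ * d m) atTop (𝓝 L)) :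
    Tendsto (fun n : ℕ => (n : ℝ)⁻¹ * ∑ m ∈ Icc 1 n, d m) atTop (𝓝 0) := by
  set s : ℕ → ℝ := fun n => ∑ m ∈ Icc 1 n, (m : ℝ)⁻¹ * d m
  have hparts : ∀ n, ∑ m ∈ Icc 1 n, d m = n * s n - ∑ k ∈ range n, s k := by
    intro n
    induction n with
    | zero => simp
    | succ n ih =>
      simp only [s, sum_Icc_succ_top (Nat.le_add_left 1 n), sum_range_succ] at ih ⊢
      rw [ih]
      field_simp
      push_cast
      ring
  have hlim : Tendsto (fun n : ℕ => s n - (n : ℝ)⁻¹ * ∑ k ∈ range n, s k) atTop (𝓝 (L - L)) :=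
    h.sub h.cesaro
  rw [sub_self] at hlim
  refine hlim.congr' ?_
  filter_upwards [eventually_ne_atTop 0] with n hn
  rw [hparts, mul_sub, inv_mul_cancel_left₀ (Nat.cast_ne_zero.2 hn)]

lemma sum_range_two_mul_add_one (n : ℕ) : ∑ k ∈ range n, (2 * (k : ℝ) + 1) = (n : ℝ) ^ 2 := by
  induction n with
  | zero => simp
  | succ n ih => rw [sum_range_succ, ih]; push_cast; ring

lemma summable_sum_range_two_mul_add_one_mul_div_sq {q : ℕ → ℝ} (hq0 : ∀ k, 0 ≤ q k)
    (hq : Summable q) :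
    Summable fun n : ℕ => (∑ k ∈ range n, (2 * (k : ℝ) + 1) * q k) / (n : ℝ) ^ 2 := by
  refine summable_of_sum_range_le (c := 4 * ∑' k, q k)
    (fun n => div_nonneg (sum_nonneg fun k _ => by have := hq0 k; positivity) (sq_nonneg _))
    fun N => ?_
  calc ∑ n ∈ range N, (∑ k ∈ range n, (2 * (k : ℝ) + 1) * q k) / (n : ℝ) ^ 2
      = ∑ k ∈ range N, (2 * (k : ℝ) + 1) * q k * ∑ n ∈ Ioo k N, ((n : ℝ) ^ 2)⁻¹ := by
        simp_rw [div_eq_mul_inv, sum_mul, mul_sum]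
        exact sum_comm' fun n k => by simp only [mem_range, mem_Ioo]; omega
    _ ≤ ∑ k ∈ range N, 4 * q k := by
        refine sum_le_sum fun k _ => ?_
        have hk : (2 * (k : ℝ) + 1) * (2 / (k + 1)) ≤ 4 := by
          rw [mul_div_assoc', div_le_iff₀ (by positivity)]
          linarith
        calc (2 * (k : ℝ) + 1) * q k * ∑ n ∈ Ioo k N, ((n : ℝ) ^ 2)⁻¹
            ≤ (2 * (k : ℝ) + 1) * q k * (2 / (k + 1)) :=
              mul_le_mul_of_nonneg_left (sum_Ioo_inv_sq_le k N) (by have := hq0 k; positivity)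
          _ = (2 * (k : ℝ) + 1) * (2 / (k + 1)) * q k := by ring
          _ ≤ 4 * q k := mul_le_mul_of_nonneg_right hk (hq0 k)
    _ ≤ 4 * ∑' k, q k := by
        rw [← mul_sum]
        exact mul_le_mul_of_nonneg_left (hq.sum_le_tsum _ fun k _ => hq0 k) (by norm_num)

section Martingale

variable {Ω : Type*} {m0 : MeasurableSpace Ω} {μ : Measure Ω} [IsFiniteMeasure μ]

lemma integral_sq_sub_condExp_le {m : MeasurableSpace Ω} (hm : m ≤ m0) {X : Ω → ℝ}
    (hX : MemLp X 2 μ) : ∫ ω, (X ω - μ[X | m] ω) ^ 2 ∂μ ≤ ∫ ω, X ω ^ 2 ∂μ :=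
  calc ∫ ω, (X ω - μ[X | m] ω) ^ 2 ∂μ = ∫ ω, Var[X; μ | m] ω ∂μ := (integral_condExp hm).symm
    _ ≤ ∫ ω, μ[X ^ 2 | m] ω ∂μ :=
        integral_mono_ae integrable_condVar integrable_condExp (condVar_ae_le_condExp_sq hm hX)
    _ = ∫ ω, X ω ^ 2 ∂μ := integral_condExp hm

variable {F : Filtration ℕ m0} {M : ℕ → Ω → ℝ}

lemma Martingale.integral_sq_succ (hM : Martingale M F μ) (hM2 : ∀ n, MemLp (M n) 2 μ) (n : ℕ) :
    ∫ ω, M (n + 1) ω ^ 2 ∂μ = ∫ ω, M n ω ^ 2 ∂μ + ∫ ω, (M (n + 1) ω - M n ω) ^ 2 ∂μ := by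
  have hprod : Integrable (M n * M (n + 1)) μ := (hM2 n).integrable_mul (hM2 (n + 1))
  have hcross : ∫ ω, M n ω * M (n + 1) ω ∂μ = ∫ ω, M n ω ^ 2 ∂μ := by
    refine (integral_condExp (F.le n) (f := M n * M (n + 1))).symm.trans (integral_congr_ae ?_)
    filter_upwards [condExp_mul_of_stronglyMeasurable_left (hM.stronglyAdapted n) hprod
      (hM.integrable (n + 1)), hM.condExp_ae_eq n.le_succ] with ω h1 h2
    rw [h1, Pi.mul_apply, h2, sq]
  have hexp : ∀ ω, (M (n + 1) ω - M n ω) ^ 2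
      = M (n + 1) ω ^ 2 - 2 * (M n ω * M (n + 1) ω) + M n ω ^ 2 := fun ω => by ring
  simp_rw [hexp]
  rw [integral_add (f := fun ω => M (n + 1) ω ^ 2 - 2 * (M n ω * M (n + 1) ω))
      ((hM2 (n + 1)).integrable_sq.sub (hprod.const_mul 2)) (hM2 n).integrable_sq,
    integral_sub (g := fun ω => 2 * (M n ω * M (n + 1) ω)) (hM2 (n + 1)).integrable_sq
      (hprod.const_mul 2), integral_const_mul, hcross]
  ring

lemma Martingale.exists_ae_tendsto_of_integral_sq_le (hM : Martingale M F μ)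
    (hM2 : ∀ n, MemLp (M n) 2 μ) {B : ℝ} (hB : ∀ n, ∫ ω, M n ω ^ 2 ∂μ ≤ B) :
    ∀ᵐ ω ∂μ, ∃ c, Tendsto (fun n => M n ω) atTop (𝓝 c) := by
  refine hM.submartingale.exists_ae_tendsto_of_bdd (R := (μ.real Set.univ + B).toNNReal)
    fun n => ?_
  have habs : ∀ x : ℝ, ‖x‖ ≤ 1 + x ^ 2 := fun x => by
    rw [Real.norm_eq_abs]; nlinarith [sq_nonneg (|x| - 1), sq_abs x, abs_nonneg x]
  rw [eLpNorm_one_eq_lintegral_enorm, ← ofReal_integral_norm_eq_lintegral_enorm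
    ((hM2 n).integrable one_le_two)]
  refine ENNReal.ofReal_le_ofReal ((integral_mono (g := fun ω => 1 + M n ω ^ 2)
    ((hM2 n).integrable one_le_two).norm
    ((integrable_const 1).add (hM2 n).integrable_sq) fun ω => habs (M n ω)).trans ?_)
  rw [integral_add (integrable_const 1) (hM2 n).integrable_sq, integral_const, smul_eq_mul,
    mul_one]
  linarith [hB n]

lemma martingale_sum_smul_sub_condExp (F : Filtration ℕ m0) {g : ℕ → Ω → ℝ}
    (hg : StronglyAdapted F g) (hint : ∀ n, Integrable (g n) μ) (c : ℕ → ℝ) :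
    Martingale (fun n => ∑ m ∈ Icc 1 n, c m • (g m - μ[g m | F (m - 1)])) F μ := by
  refine martingale_of_condExp_sub_eq_zero_nat (fun n => ?_)
    (fun n => integrable_finsetSum' _ fun m _ => ((hint m).sub integrable_condExp).smul (c m))
    fun n => ?_
  · exact Finset.stronglyMeasurable_sum _ fun m hm => (((hg m).mono (F.mono (mem_Icc.1 hm).2)).sub
      (stronglyMeasurable_condExp.mono (F.mono ((m.sub_le 1).trans (mem_Icc.1 hm).2)))).const_smul _
  · rw [sum_Icc_succ_top (Nat.le_add_left 1 n), add_sub_cancel_left, Nat.add_sub_cancel]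
    filter_upwards [condExp_smul (m := F n) (μ := μ) (c (n + 1)) (g (n + 1) - μ[g (n + 1) | F n]),
      condExp_sub (m := F n) (hint (n + 1)) (integrable_condExp (m := F n))] with ω h1 h2
    rw [h1, Pi.smul_apply, h2, Pi.sub_apply, condExp_of_stronglyMeasurable (F.le n)
      stronglyMeasurable_condExp integrable_condExp, sub_self, smul_zero, Pi.zero_apply]

theorem ae_tendsto_inv_mul_sum_sub_condExp (F : Filtration ℕ m0) {g : ℕ → Ω → ℝ}
    (hg : StronglyAdapted F g) (hg2 : ∀ n, MemLp (g n) 2 μ)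
    (hsum : Summable fun n : ℕ => (∫ ω, g n ω ^ 2 ∂μ) / (n : ℝ) ^ 2) :
    ∀ᵐ ω ∂μ, Tendsto (fun n : ℕ => (n : ℝ)⁻¹ * ∑ m ∈ Icc 1 n,
      (g m ω - μ[g m | F (m - 1)] ω)) atTop (𝓝 0) := by
  set M : ℕ → Ω → ℝ := fun n => ∑ m ∈ Icc 1 n, (m : ℝ)⁻¹ • (g m - μ[g m | F (m - 1)])
  have hM : Martingale M F μ :=
    martingale_sum_smul_sub_condExp F hg (fun n => (hg2 n).integrable one_le_two) _
  have hM2 : ∀ n, MemLp (M n) 2 μ := fun n => memLp_finsetSum' _ fun m _ =>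
    ((hg2 m).sub ((hg2 m).condExp one_le_two)).const_smul _
  have hterm : ∀ m : ℕ, 0 ≤ (∫ ω, g m ω ^ 2 ∂μ) / (m : ℝ) ^ 2 := fun m =>
    div_nonneg (integral_nonneg fun ω => sq_nonneg _) (sq_nonneg _)
  have hB : ∀ n, ∫ ω, M n ω ^ 2 ∂μ ≤ ∑ m ∈ range (n + 1), (∫ ω, g m ω ^ 2 ∂μ) / (m : ℝ) ^ 2 := by
    intro n
    induction n with
    | zero => simp [M]
    | succ n ih =>
      rw [Martingale.integral_sq_succ hM hM2, sum_range_succ]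
      refine add_le_add ih ?_
      have hincr : ∀ ω, (M (n + 1) ω - M n ω) ^ 2
          = ((n : ℝ) + 1)⁻¹ ^ 2 * (g (n + 1) ω - μ[g (n + 1) | F n] ω) ^ 2 := fun ω => by
        simp only [M, Finset.sum_apply, sum_Icc_succ_top (Nat.le_add_left 1 n),
          add_sub_cancel_left, Pi.smul_apply, Pi.sub_apply, smul_eq_mul, Nat.add_sub_cancel,
          Nat.cast_succ, mul_pow]
      simp_rw [hincr]
      rw [integral_const_mul, div_eq_inv_mul, Nat.cast_succ, inv_pow]
      exact mul_le_mul_of_nonneg_left (integral_sq_sub_condExp_le (F.le _) (hg2 (n + 1)))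
        (by positivity)
  filter_upwards [Martingale.exists_ae_tendsto_of_integral_sq_le hM hM2
    fun n => (hB n).trans (hsum.sum_le_tsum _ fun m _ => hterm m)] with ω ⟨L, hL⟩
  exact Tendsto.kronecker (L := L) (by simpa [M] using hL)

end Martingale

section Truncation

variable {Ω : Type*} {m0 : MeasurableSpace Ω} {μ : Measure Ω}

/-- The two series of Kolmogorov's truncation argument at the levels `Z n ≤ n`. -/
def TruncationSummable (μ : Measure Ω) (Z : ℕ → Ω → ℝ) : Prop :=
  (Summable fun n : ℕ => μ.real {ω | (n : ℝ) < Z n ω}) ∧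
    Summable fun n : ℕ => (∫ ω, (if Z n ω ≤ n then Z n ω ^ 2 else 0) ∂μ) / (n : ℝ) ^ 2

lemma ofReal_mul_measure_lt_le_lintegral {Y : Ω → ℝ} (hY : Measurable Y) (hY0 : ∀ ω, 0 ≤ Y ω)
    {φ : ℝ → ℝ} {x₀ t : ℝ} (hφ_pos : ∀ x, x₀ ≤ x → 0 < φ x)
    (hφ_mono : ∀ x y, x₀ ≤ x → x ≤ y → φ x ≤ φ y) (ht : x₀ ≤ t) :
    ENNReal.ofReal (t * φ t) * μ {ω | t < Y ω} ≤ ∫⁻ ω, ENNReal.ofReal (Y ω * φ (Y ω)) ∂μ := by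
  rw [← lintegral_indicator_const (measurableSet_lt measurable_const hY)]
  refine lintegral_mono fun ω => ?_
  by_cases hω : ω ∈ {ω | t < Y ω}
  · have hlt : t < Y ω := hω
    rw [Set.indicator_of_mem hω]
    exact ENNReal.ofReal_le_ofReal
      (mul_le_mul hlt.le (hφ_mono _ _ ht hlt.le) (hφ_pos t ht).le (hY0 ω))
  · rw [Set.indicator_of_notMem hω]
    exact zero_le

lemma lintegral_ite_sq_le {Y : Ω → ℝ} (hY0 : ∀ ω, 0 ≤ Y ω) {φ : ℝ → ℝ} {x₀ t : ℝ}
    (hφ_pos : ∀ x, x₀ ≤ x → 0 < φ x) (hφ_div : ∀ x y, x₀ ≤ x → x ≤ y → x / φ x ≤ y / φ y)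
    (ht : x₀ ≤ t) :
    ∫⁻ ω, ENNReal.ofReal (if Y ω ≤ t then Y ω ^ 2 else 0) ∂μ
      ≤ ENNReal.ofReal (x₀ ^ 2) * μ Set.univ
        + ENNReal.ofReal (t / φ t) * ∫⁻ ω, ENNReal.ofReal (Y ω * φ (Y ω)) ∂μ := by
  rw [← lintegral_const, ← lintegral_const_mul' _ _ ENNReal.ofReal_ne_top,
    ← lintegral_add_left measurable_const]
  refine lintegral_mono fun ω => ?_
  split_ifs with h
  · rcases lt_or_ge (Y ω) x₀ with hlt | hge
    · exact le_add_right (ENNReal.ofReal_le_ofReal (pow_le_pow_left₀ (hY0 ω) hlt.le 2))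
    · have hφY := hφ_pos _ hge
      rw [← ENNReal.ofReal_mul (div_nonneg ((hY0 ω).trans h) (hφ_pos t ht).le)]
      refine le_add_left (ENNReal.ofReal_le_ofReal ?_)
      calc Y ω ^ 2 = Y ω / φ (Y ω) * (Y ω * φ (Y ω)) := by field_simp
        _ ≤ t / φ t * (Y ω * φ (Y ω)) :=
            mul_le_mul_of_nonneg_right (hφ_div _ _ hge h) (mul_nonneg (hY0 ω) hφY.le)
  · simp

lemma ite_sq_le_sum_range {x : ℝ} (hx : 0 ≤ x) (n : ℕ) :
    (if x ≤ n then x ^ 2 else 0) ≤ ∑ k ∈ range n, if (k : ℝ) < x then 2 * (k : ℝ) + 1 else 0 := by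
  have hnonneg : ∀ k ∈ range n, 0 ≤ if (k : ℝ) < x then 2 * (k : ℝ) + 1 else 0 := fun k _ => by
    split_ifs <;> positivity
  split_ifs with hxn
  · calc x ^ 2 ≤ (⌈x⌉₊ : ℝ) ^ 2 := pow_le_pow_left₀ hx (Nat.le_ceil x) 2
      _ = ∑ k ∈ range ⌈x⌉₊, if (k : ℝ) < x then 2 * (k : ℝ) + 1 else 0 := by
          rw [← sum_range_two_mul_add_one]
          exact sum_congr rfl fun k hk => (if_pos (Nat.lt_ceil.1 (mem_range.1 hk))).symm
      _ ≤ _ := sum_le_sum_of_subset_of_nonneg (range_subset_range.2 (Nat.ceil_le.2 hxn))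
          fun k hk _ => hnonneg k hk
  · exact sum_nonneg hnonneg

variable [IsFiniteMeasure μ]

lemma integrable_ite_sq {Y : Ω → ℝ} (hY : Measurable Y) (hY0 : ∀ ω, 0 ≤ Y ω) (n : ℕ) :
    Integrable (fun ω => if Y ω ≤ n then Y ω ^ 2 else 0) μ := by
  refine Integrable.of_bound (C := (n : ℝ) ^ 2) (Measurable.ite (measurableSet_le hY
    measurable_const) (hY.pow_const 2) measurable_const).aestronglyMeasurable
    (ae_of_all _ fun ω => ?_)
  split_ifs with h
  · rw [Real.norm_eq_abs, abs_sq]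
    exact pow_le_pow_left₀ (hY0 ω) h 2
  · simp

lemma TruncationSummable.ae_eventually_le {Z : ℕ → Ω → ℝ} (hZ : TruncationSummable μ Z) :
    ∀ᵐ ω ∂μ, ∀ᶠ n : ℕ in atTop, Z n ω ≤ n := by
  have htsum : ∑' n : ℕ, μ {ω | (n : ℝ) < Z n ω} ≠ ∞ := by
    simp_rw [← ofReal_measureReal (measure_ne_top μ _)]
    rw [← ENNReal.ofReal_tsum_of_nonneg (fun n => measureReal_nonneg) hZ.1]
    exact ENNReal.ofReal_ne_top
  filter_upwards [ae_eventually_notMem htsum] with ω hω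
  filter_upwards [hω] with n hn
  exact not_lt.1 hn

lemma TruncationSummable.ae_tendsto_inv_mul_sum_sub_mul_ite {Z : ℕ → Ω → ℝ}
    (hZs : TruncationSummable μ Z) (X : ℕ → Ω → ℝ) :
    ∀ᵐ ω ∂μ, Tendsto (fun n : ℕ => (n : ℝ)⁻¹ * ∑ m ∈ Icc 1 n,
      (X m ω - X m ω * if Z m ω ≤ m then 1 else 0)) atTop (𝓝 0) := by
  filter_upwards [hZs.ae_eventually_le] with ω hle
  refine tendsto_inv_smul_sum_Icc_of_norm_le (fun k => le_rfl) (Tendsto.cesaro ?_)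
  refine tendsto_const_nhds.congr' ?_
  filter_upwards [(tendsto_add_atTop_nat 1).eventually hle] with k hk
  simp only [if_pos hk, mul_one, sub_self, norm_zero]

theorem ae_tendsto_inv_mul_sum_mul_ite_sub_condExp (F : Filtration ℕ m0)
    {X Z : ℕ → Ω → ℝ} {c : ℝ} (hc : 0 ≤ c) (hX : ∀ n, Measurable[F n] (X n))
    (hZ : ∀ n, Measurable[F n] (Z n)) (hZ0 : ∀ n ω, 0 ≤ Z n ω)
    (hXZ : ∀ n ω, |X n ω| ≤ c * Z n ω) (hZs : TruncationSummable μ Z) :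
    ∀ᵐ ω ∂μ, Tendsto (fun n : ℕ => (n : ℝ)⁻¹ * ∑ m ∈ Icc 1 n,
      ((X m ω * if Z m ω ≤ m then 1 else 0) -
        μ[fun ω' => X m ω' * (if Z m ω' ≤ m then 1 else 0) | F (m - 1)] ω)) atTop (𝓝 0) := by
  set g : ℕ → Ω → ℝ := fun m ω => X m ω * if Z m ω ≤ m then 1 else 0
  have hg : ∀ m, Measurable[F m] (g m) := fun m =>
    (hX m).mul (Measurable.ite (measurableSet_le (hZ m) measurable_const) measurable_const
      measurable_const)
  have hg_sq : ∀ m ω, g m ω ^ 2 ≤ c ^ 2 * if Z m ω ≤ m then Z m ω ^ 2 else 0 := fun m ω => by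
    simp only [g]
    split_ifs
    · rw [mul_one, ← mul_pow, ← sq_abs]
      exact pow_le_pow_left₀ (abs_nonneg _) (hXZ m ω) 2
    · simp
  have hg_bdd : ∀ m ω, ‖g m ω‖ ≤ c * m := fun m ω => by
    simp only [g, Real.norm_eq_abs]
    split_ifs with h
    · rw [mul_one]
      exact (hXZ m ω).trans (mul_le_mul_of_nonneg_left h hc)
    · simp only [mul_zero, abs_zero]
      positivity
  have hg2 : ∀ m, MemLp (g m) 2 μ := fun m =>
    MemLp.of_bound ((hg m).mono (F.le m) le_rfl).aestronglyMeasurable _ (ae_of_all _ (hg_bdd m))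
  refine ae_tendsto_inv_mul_sum_sub_condExp F (fun m => (hg m).stronglyMeasurable) hg2 ?_
  refine (hZs.2.mul_left (c ^ 2)).of_nonneg_of_le
    (fun m => div_nonneg (integral_nonneg fun ω => sq_nonneg _) (sq_nonneg _)) fun m => ?_
  have htrunc := integrable_ite_sq (μ := μ) ((hZ m).mono (F.le m) le_rfl) (hZ0 m) m
  rw [← mul_div_assoc, ← integral_const_mul]
  exact div_le_div_of_nonneg_right
    (integral_mono (hg2 m).integrable_sq (htrunc.const_mul _) (hg_sq m)) (sq_nonneg _)

theorem ae_tendsto_inv_mul_sum_sub_condExp_truncation (F : Filtration ℕ m0)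
    {X Z : ℕ → Ω → ℝ} {c : ℝ} (hc : 0 ≤ c) (hX : ∀ n, Measurable[F n] (X n))
    (hZ : ∀ n, Measurable[F n] (Z n)) (hZ0 : ∀ n ω, 0 ≤ Z n ω)
    (hXZ : ∀ n ω, |X n ω| ≤ c * Z n ω) (hZs : TruncationSummable μ Z) :
    ∀ᵐ ω ∂μ, Tendsto (fun n : ℕ => (n : ℝ)⁻¹ * ∑ m ∈ Icc 1 n,
      (X m ω - μ[fun ω' => X m ω' * (if Z m ω' ≤ m then 1 else 0) | F (m - 1)] ω))
      atTop (𝓝 0) := by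
  filter_upwards [ae_tendsto_inv_mul_sum_mul_ite_sub_condExp F hc hX hZ hZ0 hXZ hZs,
    hZs.ae_tendsto_inv_mul_sum_sub_mul_ite X] with ω htrunc htail
  have hsum := htrunc.add htail
  rw [add_zero] at hsum
  refine hsum.congr fun n => ?_
  rw [← mul_add, ← sum_add_distrib]
  simp only [sub_add_sub_cancel']

lemma integral_ite_sq_le_sum_range {Y : Ω → ℝ} (hY : Measurable Y) (hY0 : ∀ ω, 0 ≤ Y ω)
    (n : ℕ) : ∫ ω, (if Y ω ≤ n then Y ω ^ 2 else 0) ∂μ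
      ≤ ∑ k ∈ range n, (2 * (k : ℝ) + 1) * μ.real {ω | (k : ℝ) < Y ω} := by
  have hlevel : ∀ k : ℕ, MeasurableSet {ω | (k : ℝ) < Y ω} := fun k =>
    measurableSet_lt measurable_const hY
  calc ∫ ω, (if Y ω ≤ n then Y ω ^ 2 else 0) ∂μ
      ≤ ∫ ω, ∑ k ∈ range n, {ω | (k : ℝ) < Y ω}.indicator (fun _ => 2 * (k : ℝ) + 1) ω ∂μ := by
        refine integral_mono (integrable_ite_sq hY hY0 n)
          (integrable_finsetSum _ fun k _ => (integrable_const _).indicator (hlevel k))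
          fun ω => ?_
        simpa only [Set.indicator_apply, Set.mem_ofPred_eq] using ite_sq_le_sum_range (hY0 ω) n
    _ = ∑ k ∈ range n, (2 * (k : ℝ) + 1) * μ.real {ω | (k : ℝ) < Y ω} := by
        rw [integral_finsetSum _ fun k _ => (integrable_const _).indicator (hlevel k)]
        exact sum_congr rfl fun k _ => by rw [integral_indicator_const _ (hlevel k), smul_eq_mul,
          mul_comm]

lemma truncationSummable_of_measureReal_le {Z : ℕ → Ω → ℝ} (hZ : ∀ n, Measurable (Z n))
    (hZ0 : ∀ n ω, 0 ≤ Z n ω) {q : ℕ → ℝ} (hq : Summable q)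
    (hZq : ∀ n, 1 ≤ n → ∀ k : ℕ, μ.real {ω | (k : ℝ) < Z n ω} ≤ q k) :
    TruncationSummable μ Z := by
  have hq0 : ∀ k, 0 ≤ q k := fun k => measureReal_nonneg.trans (hZq 1 le_rfl k)
  refine ⟨(summable_nat_add_iff 1).1 (((summable_nat_add_iff 1).2 hq).of_nonneg_of_le
    (fun n => measureReal_nonneg) fun n => hZq (n + 1) (Nat.le_add_left 1 n) (n + 1)), ?_⟩
  refine (summable_sum_range_two_mul_add_one_mul_div_sq hq0 hq).of_nonneg_of_le
    (fun n => div_nonneg (integral_nonneg fun ω => by split_ifs <;> positivity) (sq_nonneg _))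
    fun n => ?_
  rcases Nat.eq_zero_or_pos n with rfl | hn
  · simp
  refine div_le_div_of_nonneg_right ((integral_ite_sq_le_sum_range (hZ n) (hZ0 n) n).trans
    (sum_le_sum fun k _ => mul_le_mul_of_nonneg_left (hZq n hn k) (by positivity))) (sq_nonneg _)

lemma truncationSummable_of_lintegral_mul_le {Z : ℕ → Ω → ℝ} (hZ : ∀ n, Measurable (Z n))
    (hZ0 : ∀ n ω, 0 ≤ Z n ω) {φ : ℝ → ℝ} {x₀ : ℝ} (hφ_pos : ∀ x, x₀ ≤ x → 0 < φ x)
    (hφ_mono : ∀ x y, x₀ ≤ x → x ≤ y → φ x ≤ φ y)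
    (hφ_div : ∀ x y, x₀ ≤ x → x ≤ y → x / φ x ≤ y / φ y)
    (hφ_sum : Summable fun n : ℕ => 1 / (n * φ n)) {M : ℝ≥0∞} (hM : M ≠ ∞)
    (hZM : ∀ n, 1 ≤ n → ∫⁻ ω, ENNReal.ofReal (Z n ω * φ (Z n ω)) ∂μ ≤ M) :
    TruncationSummable μ Z := by
  have hlarge : ∀ᶠ n : ℕ in atTop, 1 ≤ n ∧ x₀ ≤ n :=
    (eventually_ge_atTop 1).and (tendsto_natCast_atTop_atTop.eventually_ge_atTop x₀)
  constructor
  · refine Summable.of_norm_bounded_eventually_nat (hφ_sum.mul_left M.toReal) ?_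
    filter_upwards [hlarge] with n ⟨hn1, hnx⟩
    have hφn : 0 < (n : ℝ) * φ n := mul_pos (by exact_mod_cast hn1) (hφ_pos n hnx)
    rw [Real.norm_of_nonneg measureReal_nonneg, mul_one_div, le_div_iff₀ hφn, measureReal_def,
      ← ENNReal.toReal_ofReal hφn.le, ← ENNReal.toReal_mul, mul_comm]
    exact ENNReal.toReal_mono hM ((ofReal_mul_measure_lt_le_lintegral (hZ n) (hZ0 n) hφ_pos
      hφ_mono hnx).trans (hZM n hn1))
  · refine Summable.of_norm_bounded_eventually_nat
      (((Real.summable_nat_pow_inv.2 one_lt_two).mul_left (x₀ ^ 2 * μ.real Set.univ)).add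
        (hφ_sum.mul_left M.toReal)) ?_
    filter_upwards [hlarge] with n ⟨hn1, hnx⟩
    have hn : (0 : ℝ) < n := by exact_mod_cast hn1
    have hφn : 0 < φ n := hφ_pos n hnx
    have hint : ∫ ω, (if Z n ω ≤ n then Z n ω ^ 2 else 0) ∂μ
        ≤ x₀ ^ 2 * μ.real Set.univ + n / φ n * M.toReal := by
      rw [integral_eq_lintegral_of_nonneg_ae (ae_of_all _ fun ω => by split_ifs <;> positivity)
        (integrable_ite_sq (hZ n) (hZ0 n) n).aestronglyMeasurable]
      refine ENNReal.toReal_le_of_le_ofReal (by positivity)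
        ((lintegral_ite_sq_le (hZ0 n) hφ_pos hφ_div hnx).trans ?_)
      rw [ENNReal.ofReal_add (by positivity) (by positivity), ENNReal.ofReal_mul (by positivity),
        ENNReal.ofReal_mul (by positivity), ofReal_measureReal, ENNReal.ofReal_toReal hM]
      gcongr
      exact hZM n hn1
    rw [Real.norm_of_nonneg (div_nonneg (integral_nonneg fun ω => by split_ifs <;> positivity)
      (sq_nonneg _))]
    calc (∫ ω, (if Z n ω ≤ n then Z n ω ^ 2 else 0) ∂μ) / (n : ℝ) ^ 2
        ≤ (x₀ ^ 2 * μ.real Set.univ + n / φ n * M.toReal) / (n : ℝ) ^ 2 :=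
          div_le_div_of_nonneg_right hint (sq_nonneg _)
      _ = x₀ ^ 2 * μ.real Set.univ * ((n : ℝ) ^ 2)⁻¹ + M.toReal * (1 / (n * φ n)) := by
          field_simp

end Truncation

lemma truncationSummable_of_measure_lt_le_mul {Ω : Type*} {m0 : MeasurableSpace Ω}
    {μ : Measure Ω} [IsProbabilityMeasure μ] {Z : ℕ → Ω → ℝ} (hZ : ∀ n, Measurable (Z n))
    (hZ0 : ∀ n ω, 0 ≤ Z n ω) {c : ℝ} (hc : 0 ≤ c) {Y : Ω → ℝ} (hY : Integrable Y μ)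
    (hY0 : ∀ ω, 0 ≤ Y ω)
    (hZY : ∀ n, 1 ≤ n → ∀ x : ℝ, 0 < x → μ {ω | x < Z n ω} ≤ ENNReal.ofReal c * μ {ω | x < Y ω}) :
    TruncationSummable μ Z := by
  have hYtail : Summable fun k : ℕ => μ.real {ω | (k : ℝ) < Y ω} := by
    let : MeasureSpace Ω := ⟨μ⟩
    exact ENNReal.summable_toReal (tsum_prob_mem_Ioi_lt_top hY fun ω => hY0 ω).ne
  -- the domination is only assumed at levels `x > 0`; level `0` is bounded by `1`
  refine truncationSummable_of_measureReal_le hZ hZ0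
    (q := fun k => (if k = 0 then 1 else 0) + c * μ.real {ω | (k : ℝ) < Y ω})
    ((hasSum_ite_eq 0 1).summable.add (hYtail.mul_left c)) fun n hn k => ?_
  rcases Nat.eq_zero_or_pos k with rfl | hk
  · exact measureReal_le_one.trans (le_add_of_nonneg_right (by positivity))
  · rw [if_neg hk.ne', zero_add, measureReal_def, measureReal_def, ← ENNReal.toReal_ofReal hc,
      ← ENNReal.toReal_mul]
    exact ENNReal.toReal_mono (by finiteness) (hZY n hn k (by exact_mod_cast hk))

lemma Measurable.apply_countable {α ι β : Type*} {mα : MeasurableSpace α} [MeasurableSpace ι]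
    [Countable ι] [MeasurableSingletonClass ι] [MeasurableSpace β] {f : α → ι → β} {i : α → ι}
    (hf : Measurable f) (hi : Measurable i) : Measurable fun a => f a (i a) :=
  (measurable_from_prod_countable_left (f := fun p : (ι → β) × ι => p.1 p.2)
    fun j => measurable_pi_apply j).comp (hf.prodMk hi)

section Urn

variable {Ω : Type*} {m0 : MeasurableSpace Ω} {K : ℕ} {C : ℕ → Ω → Fin K → ℝ}
  {R : ℕ → Ω → Fin K → Fin K → ℝ} {χ : ℕ → Ω → Fin K} {S : ℕ → Ω → ℝ}

lemma urn_composition_nonneg (hEvol : ∀ n, 1 ≤ n → ∀ ω j, C n ω j = C (n - 1) ω j + R n ω (χ n ω) j)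
    (hR : ∀ n, 1 ≤ n → ∀ ω i j, 0 ≤ R n ω i j) (hC0 : ∀ ω i, 0 ≤ C 0 ω i) :
    ∀ n ω i, 0 ≤ C n ω i := by
  intro n
  induction n with
  | zero => exact hC0
  | succ n ih =>
    intro ω i
    rw [hEvol (n + 1) (Nat.le_add_left 1 n), Nat.add_sub_cancel]
    exact add_nonneg (ih ω i) (hR (n + 1) (Nat.le_add_left 1 n) ω _ i)

lemma urn_composition_measurable (F : Filtration ℕ m0)
    (hEvol : ∀ n, 1 ≤ n → ∀ ω j, C n ω j = C (n - 1) ω j + R n ω (χ n ω) j)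
    (hC0 : Measurable[F 0] (C 0)) (hχ : ∀ n, Measurable[F n] (χ n))
    (hR : ∀ n, Measurable[F n] (R n)) : ∀ n, Measurable[F n] (C n) := by
  intro n
  induction n with
  | zero => exact hC0
  | succ n ih =>
    have hsucc : C (n + 1) = fun ω => C n ω + R (n + 1) ω (χ (n + 1) ω) :=
      funext fun ω => funext fun j => hEvol (n + 1) (Nat.le_add_left 1 n) ω j
    rw [hsucc]
    exact (ih.mono (F.mono n.le_succ) le_rfl).add ((hR (n + 1)).apply_countable (hχ (n + 1)))

lemma urn_proportion_nonneg (hS : ∀ n ω, S n ω = ∑ i, C n ω i) (hC : ∀ n ω i, 0 ≤ C n ω i)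
    (n : ℕ) (ω : Ω) (i : Fin K) : 0 ≤ C n ω i / S n ω :=
  div_nonneg (hC n ω i) (hS n ω ▸ sum_nonneg fun k _ => hC n ω k)

-- Not `= 1`: when `S n ω = 0` every proportion is the junk value `0 / 0 = 0`.
lemma urn_sum_proportion_le_one (hS : ∀ n ω, S n ω = ∑ i, C n ω i) (n : ℕ) (ω : Ω) :
    ∑ i, C n ω i / S n ω ≤ 1 := by
  rw [← sum_div, ← hS]
  exact div_self_le_one _

theorem ae_tendsto_urn_martingale_error {μ : Measure Ω} [IsFiniteMeasure μ]
    (F : Filtration ℕ m0) {Y : ℕ → Ω → ℝ} (hS : ∀ n ω, S n ω = ∑ i, C n ω i)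
    (hY : ∀ n, 1 ≤ n → ∀ ω, Y n ω = ∑ j, R n ω (χ n ω) j) (hC : ∀ n ω i, 0 ≤ C n ω i)
    (hCmeas : ∀ n, Measurable[F n] (C n)) (hχ : ∀ n, Measurable[F n] (χ n))
    (hRmeas : ∀ n, Measurable[F n] (R n))
    (hR : TruncationSummable μ fun n ω => matNorm (R n ω)) :
    ∀ᵐ ω ∂μ, Tendsto (fun n : ℕ => (n : ℝ)⁻¹ • ∑ m ∈ Icc 1 n, fun j =>
      (R m ω (χ m ω) j - C (m - 1) ω j / S (m - 1) ω * Y m ω) -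
      μ[fun ω' => (R m ω' (χ m ω') j - C (m - 1) ω' j / S (m - 1) ω' * Y m ω') *
          (if matNorm (R m ω') ≤ (m : ℝ) then 1 else 0) | F (m - 1)] ω) atTop (𝓝 0) := by
  have hRχ : ∀ n, Measurable[F n] fun ω => R n ω (χ n ω) := fun n =>
    (hRmeas n).apply_countable (hχ n)
  have hprev : ∀ n j, Measurable[F n] fun ω => C (n - 1) ω j / S (n - 1) ω := fun n j => by
    have hC' := (hCmeas (n - 1)).mono (F.mono (n.sub_le 1)) le_rfl
    simp only [hS]
    exact ((measurable_pi_apply j).comp hC').div (measurable_sum _ fun i _ =>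
      (measurable_pi_apply i).comp hC')
  have hbound : ∀ j n ω, |R n ω (χ n ω) j - C (n - 1) ω j / S (n - 1) ω * ∑ j', R n ω (χ n ω) j'|
      ≤ 2 * matNorm (R n ω) := fun j n ω =>
    (abs_sub_mul_sum_le _ (urn_proportion_nonneg hS hC _ ω j)
      ((single_le_sum (fun i _ => urn_proportion_nonneg hS hC _ ω i) (mem_univ j)).trans
        (urn_sum_proportion_le_one hS _ ω)) j).trans
      (mul_le_mul_of_nonneg_left (sum_abs_le_matNorm _ _) zero_le_two)
  -- `Y` is only specified from trial `1` on, so it is replaced by its defining sum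
  have hcoord : ∀ j, ∀ᵐ ω ∂μ, Tendsto (fun n : ℕ => (n : ℝ)⁻¹ * ∑ m ∈ Icc 1 n,
      ((R m ω (χ m ω) j - C (m - 1) ω j / S (m - 1) ω * ∑ j', R m ω (χ m ω) j') -
      μ[fun ω' => (R m ω' (χ m ω') j - C (m - 1) ω' j / S (m - 1) ω' * ∑ j', R m ω' (χ m ω') j') *
          (if matNorm (R m ω') ≤ (m : ℝ) then 1 else 0) | F (m - 1)] ω)) atTop (𝓝 0) := fun j =>
    ae_tendsto_inv_mul_sum_sub_condExp_truncation F zero_le_two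
      (fun n => ((measurable_pi_apply j).comp (hRχ n)).sub ((hprev n j).mul
        (measurable_sum _ fun j' _ => (measurable_pi_apply j').comp (hRχ n))))
      (fun n => measurable_matNorm.comp (hRmeas n)) (fun n ω => matNorm_nonneg _) (hbound j) hR
  filter_upwards [ae_all_iff.2 hcoord] with ω hω
  refine tendsto_pi_nhds.2 fun j => (hω j).congr fun n => ?_
  simp only [Pi.smul_apply, Finset.sum_apply, smul_eq_mul]
  refine congrArg _ (sum_congr rfl fun m hm => ?_)
  simp only [hY m (mem_Icc.1 hm).1]

end Urn

theorem urn_error_terms_cesaro_general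
    {Ω : Type} {m0 : MeasurableSpace Ω} {μ : Measure Ω} [IsProbabilityMeasure μ]
    {K : ℕ}
    (F : Filtration ℕ m0)
    (C : ℕ → Ω → Fin K → ℝ) (R : ℕ → Ω → Fin K → Fin K → ℝ) (χ : ℕ → Ω → Fin K)
    (S : ℕ → Ω → ℝ) (hS : ∀ n ω, S n ω = ∑ i, C n ω i)
    -- evolution of the composition vector and nonnegativity of replacements
    (hEvol : ∀ n, 1 ≤ n → ∀ ω j, C n ω j = C (n-1) ω j + R n ω (χ n ω) j)
    (hRnonneg : ∀ n, 1 ≤ n → ∀ ω i j, 0 ≤ R n ω i j)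
    -- adaptedness to the filtration `F_n = σ(C_0, (R_m, χ_m)_{m ≤ n})`
    (hC0meas : Measurable[F 0] (C 0))
    (hχmeas : ∀ n, Measurable[F n] (χ n))
    (hRmeas : ∀ n, Measurable[F n] (R n))
    -- Assumption 1
    (hC0nonneg : ∀ ω i, 0 ≤ C 0 ω i)
    -- Assumption 2 : (a) majorization, or (b) a uniform `L φ(L)` moment bound
    (hA2 :
      (∃ c : ℝ, 0 < c ∧ ∃ Rmaj : Ω → ℝ, Measurable Rmaj ∧ (∀ ω, 0 < Rmaj ω) ∧
        Integrable Rmaj μ ∧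
        ∀ n, 1 ≤ n → ∀ x : ℝ, 0 < x →
          μ {ω | x < matNorm (R n ω)} ≤ ENNReal.ofReal c * μ {ω | x < Rmaj ω}) ∨
      (∃ φ : ℝ → ℝ, (∀ x, 0 ≤ x → 0 ≤ φ x) ∧
        (∃ x₀ : ℝ, ∀ x, x₀ ≤ x → 0 < φ x) ∧
        (∃ x₀ : ℝ, ∀ x y, x₀ ≤ x → x ≤ y → φ x ≤ φ y) ∧
        (Summable fun n : ℕ => 1 / (n * φ n)) ∧
        (∃ x₀ : ℝ, ∀ x y, x₀ ≤ x → x ≤ y → x / φ x ≤ y / φ y) ∧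
        (∃ M : ℝ≥0∞, M < ⊤ ∧ ∀ n, 1 ≤ n →
          ∫⁻ ω, ENNReal.ofReal (matNorm (R n ω) * φ (matNorm (R n ω))) ∂μ ≤ M)))
    -- Assumption 3 : a.s. irreducible limit of the truncated generating matrices
    (H : Ω → Fin K → Fin K → ℝ)
    (hCesaro : ∀ᵐ ω ∂μ, Tendsto (fun n : ℕ =>
        (n : ℝ)⁻¹ * ∑ k ∈ Finset.range n,
          matNorm (fun i j =>
            (μ[fun ω' => R (k+1) ω' i j *
                (if matNorm (R (k+1) ω') ≤ ((k:ℝ)+1) then 1 else 0) | F k]) ω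
            - H ω i j))
        atTop (𝓝 0))

    -- total amount added at trial `n`
    (Y : ℕ → Ω → ℝ) (hY : ∀ n, 1 ≤ n → ∀ ω, Y n ω = ∑ j, R n ω (χ n ω) j)
    -- the martingale difference error terms
    (δ : ℕ → Ω → Fin K → ℝ)
    (hδ : ∀ n, 1 ≤ n → ∀ ω j, δ n ω j =
      (R n ω (χ n ω) j - C (n-1) ω j / S (n-1) ω * Y n ω) -
      (μ[fun ω' => (R n ω' (χ n ω') j - C (n-1) ω' j / S (n-1) ω' * Y n ω') *
          (if matNorm (R n ω') ≤ (n : ℝ) then 1 else 0) | F (n-1)]) ω)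
    -- the adjusted truncated conditional expectation error terms
    (ξ : ℕ → Ω → Fin K → ℝ)
    (hξ : ∀ n, 1 ≤ n → ∀ ω j, ξ n ω j =
      (∑ i, C (n-1) ω i / S (n-1) ω *
        ((μ[fun ω' => R n ω' i j *
            (if matNorm (R n ω') ≤ (n : ℝ) then 1 else 0) | F (n-1)]) ω - H ω i j)) -
      C (n-1) ω j / S (n-1) ω *
        (∑ i, ∑ j', C (n-1) ω i / S (n-1) ω *
          ((μ[fun ω' => R n ω' i j' *
              (if matNorm (R n ω') ≤ (n : ℝ) then 1 else 0) | F (n-1)]) ω - H ω i j'))) :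
    ∀ᵐ ω ∂μ,
      Tendsto (fun n : ℕ => (n : ℝ)⁻¹ • ∑ m ∈ Finset.Icc 1 n, δ m ω) atTop (𝓝 0) ∧
      Tendsto (fun n : ℕ => (n : ℝ)⁻¹ • ∑ m ∈ Finset.Icc 1 n, ξ m ω) atTop (𝓝 0) := by
  have hC := urn_composition_nonneg hEvol hRnonneg hC0nonneg
  have hCmeas := urn_composition_measurable F hEvol hC0meas hχmeas hRmeas
  have hRtrunc : TruncationSummable μ fun n ω => matNorm (R n ω) := by
    have hZ : ∀ n, Measurable fun ω => matNorm (R n ω) := fun n =>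
      measurable_matNorm.comp ((hRmeas n).mono (F.le n) le_rfl)
    rcases hA2 with ⟨c, hc, Rmaj, -, hRmaj0, hRmaj, hdom⟩ |
      ⟨φ, -, ⟨a, ha⟩, ⟨b, hb⟩, hsum, ⟨d, hd⟩, M, hM, hRM⟩
    · exact truncationSummable_of_measure_lt_le_mul hZ (fun n ω => matNorm_nonneg _) hc.le hRmaj
        (fun ω => (hRmaj0 ω).le) hdom
    · exact truncationSummable_of_lintegral_mul_le hZ (fun n ω => matNorm_nonneg _)
        (x₀ := max a (max b d)) (fun x hx => ha x (le_of_max_le_left hx))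
        (fun x y hx => hb x y (le_of_max_le_left (le_of_max_le_right hx)))
        (fun x y hx => hd x y (le_of_max_le_right (le_of_max_le_right hx))) hsum hM.ne hRM
  filter_upwards [ae_tendsto_urn_martingale_error F hS hY hC hCmeas hχmeas hRmeas hRtrunc,
    hCesaro] with ω hδω hHω
  refine ⟨hδω.congr fun n => congrArg _ (sum_congr rfl fun m hm =>
    funext fun j => (hδ m (mem_Icc.1 hm).1 ω j).symm),
    tendsto_inv_smul_sum_Icc_of_norm_le (fun k => ?_)
      (by simpa only [mul_sum, mul_left_comm, mul_zero] using hHω.const_mul 2)⟩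
  rw [show ξ (k + 1) ω = _ from funext (hξ (k + 1) (Nat.le_add_left 1 k) ω)]
  simpa only [Nat.add_sub_cancel, Nat.cast_succ] using norm_sum_mul_sub_mul_sum_le
    (urn_proportion_nonneg hS hC k ω) (urn_sum_proportion_le_one hS k ω) _

/-- **Lemma.**  In an urn model satisfying Assumptions 1, 2 and 3, the martingale-difference
errors `δ_n` and the adjusted truncated conditional expectation errors `ξ_n` of the
stochastic approximation equation are Cesaro negligible almost surely. -/
theorem urn_error_terms_cesaro
    {Ω : Type} {m0 : MeasurableSpace Ω} {μ : Measure Ω} [IsProbabilityMeasure μ]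
    {K : ℕ} (hK : 0 < K)
    (F : Filtration ℕ m0)
    (C : ℕ → Ω → Fin K → ℝ) (R : ℕ → Ω → Fin K → Fin K → ℝ) (χ : ℕ → Ω → Fin K)
    (S : ℕ → Ω → ℝ) (hS : ∀ n ω, S n ω = ∑ i, C n ω i)
    (N : ℕ → Ω → Fin K → ℝ)
    (hN : ∀ n ω i, N n ω i = ∑ m ∈ Finset.Icc 1 n, (if χ m ω = i then (1:ℝ) else 0))
    -- evolution of the composition vector and nonnegativity of replacements
    (hEvol : ∀ n, 1 ≤ n → ∀ ω j, C n ω j = C (n-1) ω j + R n ω (χ n ω) j)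
    (hRnonneg : ∀ n, 1 ≤ n → ∀ ω i j, 0 ≤ R n ω i j)
    -- adaptedness to the filtration `F_n = σ(C_0, (R_m, χ_m)_{m ≤ n})`
    (hC0meas : Measurable[F 0] (C 0))
    (hχmeas : ∀ n, Measurable[F n] (χ n))
    (hRmeas : ∀ n, Measurable[F n] (R n))
    (hRint : ∀ n, 1 ≤ n → ∀ i j, Integrable (fun ω => R n ω i j) μ)
    -- Assumption 1
    (hC0nonneg : ∀ ω i, 0 ≤ C 0 ω i)
    (hC0ne : ∀ ω, C 0 ω ≠ 0)
    (hC0int : ∀ i, Integrable (fun ω => C 0 ω i) μ)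
    (hCond : ∀ n, 1 ≤ n → ∀ i,
      μ[fun ω => (if χ n ω = i then (1:ℝ) else 0) | F (n-1)]
        =ᵐ[μ] fun ω => C (n-1) ω i / S (n-1) ω)
    (hCondIndep : ∀ n, 1 ≤ n → ∀ (i : Fin K) (B : Set (Fin K → Fin K → ℝ)),
      MeasurableSet B →
      μ[fun ω => (if χ n ω = i then (1:ℝ) else 0) * Set.indicator B 1 (R n ω) | F (n-1)]
        =ᵐ[μ] fun ω =>
          (μ[fun ω' => (if χ n ω' = i then (1:ℝ) else 0) | F (n-1)]) ω *
          (μ[fun ω' => Set.indicator B 1 (R n ω') | F (n-1)]) ω)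
    -- Assumption 2 : (a) majorization, or (b) a uniform `L φ(L)` moment bound
    (hA2 :
      (∃ c : ℝ, 0 < c ∧ ∃ Rmaj : Ω → ℝ, Measurable Rmaj ∧ (∀ ω, 0 < Rmaj ω) ∧
        Integrable Rmaj μ ∧
        ∀ n, 1 ≤ n → ∀ x : ℝ, 0 < x →
          μ {ω | x < matNorm (R n ω)} ≤ ENNReal.ofReal c * μ {ω | x < Rmaj ω}) ∨
      (∃ φ : ℝ → ℝ, (∀ x, 0 ≤ x → 0 ≤ φ x) ∧
        (∃ x₀ : ℝ, ∀ x, x₀ ≤ x → 0 < φ x) ∧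
        (∃ x₀ : ℝ, ∀ x y, x₀ ≤ x → x ≤ y → φ x ≤ φ y) ∧
        (Summable fun n : ℕ => 1 / (n * φ n)) ∧
        (∃ x₀ : ℝ, ∀ x y, x₀ ≤ x → x ≤ y → x / φ x ≤ y / φ y) ∧
        (∃ M : ℝ≥0∞, M < ⊤ ∧ ∀ n, 1 ≤ n →
          ∫⁻ ω, ENNReal.ofReal (matNorm (R n ω) * φ (matNorm (R n ω))) ∂μ ≤ M)))
    -- Assumption 3 : a.s. irreducible limit of the truncated generating matrices
    (H : Ω → Fin K → Fin K → ℝ)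
    (hHnonneg : ∀ᵐ ω ∂μ, ∀ i j, 0 ≤ H ω i j)
    (hHirr : ∀ᵐ ω ∂μ, MatIrreducible (H ω))
    (hCesaro : ∀ᵐ ω ∂μ, Tendsto (fun n : ℕ =>
        (n : ℝ)⁻¹ * ∑ k ∈ Finset.range n,
          matNorm (fun i j =>
            (μ[fun ω' => R (k+1) ω' i j *
                (if matNorm (R (k+1) ω') ≤ ((k:ℝ)+1) then 1 else 0) | F k]) ω
            - H ω i j))
        atTop (𝓝 0))

    -- total amount added at trial `n`
    (Y : ℕ → Ω → ℝ) (hY : ∀ n, 1 ≤ n → ∀ ω, Y n ω = ∑ j, R n ω (χ n ω) j)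
    -- the martingale difference error terms
    (δ : ℕ → Ω → Fin K → ℝ)
    (hδ : ∀ n, 1 ≤ n → ∀ ω j, δ n ω j =
      (R n ω (χ n ω) j - C (n-1) ω j / S (n-1) ω * Y n ω) -
      (μ[fun ω' => (R n ω' (χ n ω') j - C (n-1) ω' j / S (n-1) ω' * Y n ω') *
          (if matNorm (R n ω') ≤ (n : ℝ) then 1 else 0) | F (n-1)]) ω)
    -- the adjusted truncated conditional expectation error terms
    (ξ : ℕ → Ω → Fin K → ℝ)
    (hξ : ∀ n, 1 ≤ n → ∀ ω j, ξ n ω j =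
      (∑ i, C (n-1) ω i / S (n-1) ω *
        ((μ[fun ω' => R n ω' i j *
            (if matNorm (R n ω') ≤ (n : ℝ) then 1 else 0) | F (n-1)]) ω - H ω i j)) -
      C (n-1) ω j / S (n-1) ω *
        (∑ i, ∑ j', C (n-1) ω i / S (n-1) ω *
          ((μ[fun ω' => R n ω' i j' *
              (if matNorm (R n ω') ≤ (n : ℝ) then 1 else 0) | F (n-1)]) ω - H ω i j'))) :
    ∀ᵐ ω ∂μ,
      Tendsto (fun n : ℕ => (n : ℝ)⁻¹ • ∑ m ∈ Finset.Icc 1 n, δ m ω) atTop (𝓝 0) ∧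
      Tendsto (fun n : ℕ => (n : ℝ)⁻¹ • ∑ m ∈ Finset.Icc 1 n, ξ m ω) atTop (𝓝 0) :=
  urn_error_terms_cesaro_general F C R χ S hS hEvol hRnonneg hC0meas hχmeas hRmeas hC0nonneg hA2 H
    hCesaro Y hY δ hδ ξ hξ

end
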